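/- Let (ρ, u, S, κ) be a C² solution of the steady aligned MHD system on an open set of ℝ³ with ρ > 0. Then the identity curl((1 − κ²ρ)u) × u + ∇B − (ρ^{γ−1}/(γ−1))∇S = κρ|u|²∇κ holds, where B = |u|²/2 + γSρ^{γ−1}/(γ−1). -/

import Mathlib

noncomputable section

abbrev R3 : Type := ℝ × ℝ × ℝ

/-- Partial derivative in the first coordinate. -/
def pd1 (f : R3 → ℝ) (p : R3) : ℝ := deriv (fun s => f (s, p.2.1, p.2.2)) p.1

/-- Partial derivative in the second coordinate. -/
def pd2 (f : R3 → ℝ) (p : R3) : ℝ := deriv (fun s => f (p.1, s, p.2.2)) p.2.1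

/-- Partial derivative in the third coordinate. -/
def pd3 (f : R3 → ℝ) (p : R3) : ℝ := deriv (fun s => f (p.1, p.2.1, s)) p.2.2

/-- The steady aligned MHD system in Cartesian coordinates at a point `p`:
continuity, momentum (with Lorentz force `κ curl(κρu) × (ρu)`), energy, and
the transport equation `ρu·∇κ = 0`; here `P = Sρ^γ` and `e = P/((γ-1)ρ)`. -/
def CartMHD (γ : ℝ) (ρ u1 u2 u3 S κ : R3 → ℝ) (p : R3) : Prop :=
  (pd1 (fun q => ρ q * u1 q) p + pd2 (fun q => ρ q * u2 q) p
      + pd3 (fun q => ρ q * u3 q) p = 0)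
  ∧ (pd1 (fun q => ρ q * u1 q * u1 q) p + pd2 (fun q => ρ q * u1 q * u2 q) p
      + pd3 (fun q => ρ q * u1 q * u3 q) p + pd1 (fun q => S q * ρ q ^ γ) p
      = κ p * ((pd3 (fun q => κ q * ρ q * u1 q) p - pd1 (fun q => κ q * ρ q * u3 q) p)
            * (ρ p * u3 p)
          - (pd1 (fun q => κ q * ρ q * u2 q) p - pd2 (fun q => κ q * ρ q * u1 q) p)
            * (ρ p * u2 p)))
  ∧ (pd1 (fun q => ρ q * u2 q * u1 q) p + pd2 (fun q => ρ q * u2 q * u2 q) p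
      + pd3 (fun q => ρ q * u2 q * u3 q) p + pd2 (fun q => S q * ρ q ^ γ) p
      = κ p * ((pd1 (fun q => κ q * ρ q * u2 q) p - pd2 (fun q => κ q * ρ q * u1 q) p)
            * (ρ p * u1 p)
          - (pd2 (fun q => κ q * ρ q * u3 q) p - pd3 (fun q => κ q * ρ q * u2 q) p)
            * (ρ p * u3 p)))
  ∧ (pd1 (fun q => ρ q * u3 q * u1 q) p + pd2 (fun q => ρ q * u3 q * u2 q) p
      + pd3 (fun q => ρ q * u3 q * u3 q) p + pd3 (fun q => S q * ρ q ^ γ) p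
      = κ p * ((pd2 (fun q => κ q * ρ q * u3 q) p - pd3 (fun q => κ q * ρ q * u2 q) p)
            * (ρ p * u2 p)
          - (pd3 (fun q => κ q * ρ q * u1 q) p - pd1 (fun q => κ q * ρ q * u3 q) p)
            * (ρ p * u1 p)))
  ∧ (pd1 (fun q => (ρ q * ((u1 q ^ 2 + u2 q ^ 2 + u3 q ^ 2) / 2
          + S q * ρ q ^ γ / ((γ - 1) * ρ q)) + S q * ρ q ^ γ) * u1 q) p
      + pd2 (fun q => (ρ q * ((u1 q ^ 2 + u2 q ^ 2 + u3 q ^ 2) / 2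
          + S q * ρ q ^ γ / ((γ - 1) * ρ q)) + S q * ρ q ^ γ) * u2 q) p
      + pd3 (fun q => (ρ q * ((u1 q ^ 2 + u2 q ^ 2 + u3 q ^ 2) / 2
          + S q * ρ q ^ γ / ((γ - 1) * ρ q)) + S q * ρ q ^ γ) * u3 q) p = 0)
  ∧ (ρ p * (u1 p * pd1 κ p + u2 p * pd2 κ p + u3 p * pd3 κ p) = 0)

/-- The Bernoulli quantity `B = |u|²/2 + γSρ^{γ-1}/(γ-1)`. -/
def BernC (γ : ℝ) (ρ u1 u2 u3 S : R3 → ℝ) (p : R3) : ℝ :=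
  (u1 p ^ 2 + u2 p ^ 2 + u3 p ^ 2) / 2 + γ * S p * ρ p ^ (γ - 1) / (γ - 1)


theorem hasPd1 {f : R3 → ℝ} {p : R3} (hf : DifferentiableAt ℝ f p) :
    HasDerivAt (fun s => f (s, p.2.1, p.2.2)) (pd1 f p) p.1 := by
  have h : DifferentiableAt ℝ (fun s => f (s, p.2.1, p.2.2)) p.1 :=
    DifferentiableAt.comp p.1 hf (differentiableAt_id.prodMk (differentiableAt_const _))
  exact h.hasDerivAt

theorem hasPd2 {f : R3 → ℝ} {p : R3} (hf : DifferentiableAt ℝ f p) :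
    HasDerivAt (fun s => f (p.1, s, p.2.2)) (pd2 f p) p.2.1 := by
  have h : DifferentiableAt ℝ (fun s => f (p.1, s, p.2.2)) p.2.1 :=
    DifferentiableAt.comp p.2.1 hf
      ((differentiableAt_const _).prodMk (differentiableAt_id.prodMk (differentiableAt_const _)))
  exact h.hasDerivAt

theorem hasPd3 {f : R3 → ℝ} {p : R3} (hf : DifferentiableAt ℝ f p) :
    HasDerivAt (fun s => f (p.1, p.2.1, s)) (pd3 f p) p.2.2 := by
  have h : DifferentiableAt ℝ (fun s => f (p.1, p.2.1, s)) p.2.2 :=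
    DifferentiableAt.comp p.2.2 hf
      ((differentiableAt_const _).prodMk ((differentiableAt_const _).prodMk differentiableAt_id))
  exact h.hasDerivAt


/-- For a C² solution of the steady aligned MHD system with `ρ > 0`, the identity
`curl((1-κ²ρ)u) × u + ∇B - (ρ^{γ-1}/(γ-1))∇S = κρ|u|²∇κ` holds (componentwise). -/
theorem aligned_MHD_modified_vorticity_identity
    (γ : ℝ) (hγ : 1 < γ) (O : Set R3) (hO : IsOpen O)
    (ρ u1 u2 u3 S κ : R3 → ℝ)
    (hreg : ContDiffOn ℝ 2 ρ O ∧ ContDiffOn ℝ 2 u1 O ∧ ContDiffOn ℝ 2 u2 O ∧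
      ContDiffOn ℝ 2 u3 O ∧ ContDiffOn ℝ 2 S O ∧ ContDiffOn ℝ 2 κ O)
    (hρ : ∀ p ∈ O, 0 < ρ p) (hS : ∀ p ∈ O, 0 < S p)
    (hsol : ∀ p ∈ O, CartMHD γ ρ u1 u2 u3 S κ p) :
    ∀ p ∈ O,
      ((pd3 (fun q => (1 - κ q ^ 2 * ρ q) * u1 q) p
            - pd1 (fun q => (1 - κ q ^ 2 * ρ q) * u3 q) p) * u3 p
          - (pd1 (fun q => (1 - κ q ^ 2 * ρ q) * u2 q) p
            - pd2 (fun q => (1 - κ q ^ 2 * ρ q) * u1 q) p) * u2 p)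
        + pd1 (BernC γ ρ u1 u2 u3 S) p - ρ p ^ (γ - 1) / (γ - 1) * pd1 S p
        = κ p * ρ p * (u1 p ^ 2 + u2 p ^ 2 + u3 p ^ 2) * pd1 κ p ∧
      ((pd1 (fun q => (1 - κ q ^ 2 * ρ q) * u2 q) p
            - pd2 (fun q => (1 - κ q ^ 2 * ρ q) * u1 q) p) * u1 p
          - (pd2 (fun q => (1 - κ q ^ 2 * ρ q) * u3 q) p
            - pd3 (fun q => (1 - κ q ^ 2 * ρ q) * u2 q) p) * u3 p)
        + pd2 (BernC γ ρ u1 u2 u3 S) p - ρ p ^ (γ - 1) / (γ - 1) * pd2 S p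
        = κ p * ρ p * (u1 p ^ 2 + u2 p ^ 2 + u3 p ^ 2) * pd2 κ p ∧
      ((pd2 (fun q => (1 - κ q ^ 2 * ρ q) * u3 q) p
            - pd3 (fun q => (1 - κ q ^ 2 * ρ q) * u2 q) p) * u2 p
          - (pd3 (fun q => (1 - κ q ^ 2 * ρ q) * u1 q) p
            - pd1 (fun q => (1 - κ q ^ 2 * ρ q) * u3 q) p) * u1 p)
        + pd3 (BernC γ ρ u1 u2 u3 S) p - ρ p ^ (γ - 1) / (γ - 1) * pd3 S p
        = κ p * ρ p * (u1 p ^ 2 + u2 p ^ 2 + u3 p ^ 2) * pd3 κ p := by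
  intro p hp
  obtain ⟨hρr, hu1r, hu2r, hu3r, hSr, hκr⟩ := hreg
  have hmem : O ∈ nhds p := hO.mem_nhds hp
  have one_le : (2 : WithTop ℕ∞) ≠ 0 := by simp
  have dR : DifferentiableAt ℝ ρ p := (hρr.contDiffAt hmem).differentiableAt one_le
  have dU1 : DifferentiableAt ℝ u1 p := (hu1r.contDiffAt hmem).differentiableAt one_le
  have dU2 : DifferentiableAt ℝ u2 p := (hu2r.contDiffAt hmem).differentiableAt one_le
  have dU3 : DifferentiableAt ℝ u3 p := (hu3r.contDiffAt hmem).differentiableAt one_le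
  have dS : DifferentiableAt ℝ S p := (hSr.contDiffAt hmem).differentiableAt one_le
  have dK : DifferentiableAt ℝ κ p := (hκr.contDiffAt hmem).differentiableAt one_le
  have ha : ρ p ≠ 0 := (hρ p hp).ne'
  have hg1 : γ - 1 ≠ 0 := sub_ne_zero.mpr (ne_of_gt hγ)
  have hw : (γ - 1) * (γ - 1)⁻¹ = 1 := mul_inv_cancel₀ hg1
  obtain ⟨hC, hM1, hM2, hM3, -, hT⟩ := hsol p hp
  have aR1 := hasPd1 dR
  have aU11 := hasPd1 dU1
  have aU12 := hasPd1 dU2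
  have aU13 := hasPd1 dU3
  have aS1 := hasPd1 dS
  have aK1 := hasPd1 dK
  have aR2 := hasPd2 dR
  have aU21 := hasPd2 dU1
  have aU22 := hasPd2 dU2
  have aU23 := hasPd2 dU3
  have aS2 := hasPd2 dS
  have aK2 := hasPd2 dK
  have aR3 := hasPd3 dR
  have aU31 := hasPd3 dU1
  have aU32 := hasPd3 dU2
  have aU33 := hasPd3 dU3
  have aS3 := hasPd3 dS
  have aK3 := hasPd3 dK
  have aP1 : HasDerivAt (fun s => ρ (s, p.2.1, p.2.2) ^ γ) (γ * ρ p ^ (γ - 1) * pd1 ρ p) p.1 :=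
    by have := (Real.hasDerivAt_rpow_const (x := ρ p) (p := γ) (Or.inl ha)).comp p.1 aR1; exact this
  have aQ1 : HasDerivAt (fun s => ρ (s, p.2.1, p.2.2) ^ (γ - 1)) ((γ - 1) * ρ p ^ (γ - 1 - 1) * pd1 ρ p) p.1 :=
    by have := (Real.hasDerivAt_rpow_const (x := ρ p) (p := γ - 1) (Or.inl ha)).comp p.1 aR1; exact this
  have aP2 : HasDerivAt (fun s => ρ (p.1, s, p.2.2) ^ γ) (γ * ρ p ^ (γ - 1) * pd2 ρ p) p.2.1 :=
    by have := (Real.hasDerivAt_rpow_const (x := ρ p) (p := γ) (Or.inl ha)).comp p.2.1 aR2; exact this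
  have aQ2 : HasDerivAt (fun s => ρ (p.1, s, p.2.2) ^ (γ - 1)) ((γ - 1) * ρ p ^ (γ - 1 - 1) * pd2 ρ p) p.2.1 :=
    by have := (Real.hasDerivAt_rpow_const (x := ρ p) (p := γ - 1) (Or.inl ha)).comp p.2.1 aR2; exact this
  have aP3 : HasDerivAt (fun s => ρ (p.1, p.2.1, s) ^ γ) (γ * ρ p ^ (γ - 1) * pd3 ρ p) p.2.2 :=
    by have := (Real.hasDerivAt_rpow_const (x := ρ p) (p := γ) (Or.inl ha)).comp p.2.2 aR3; exact this
  have aQ3 : HasDerivAt (fun s => ρ (p.1, p.2.1, s) ^ (γ - 1)) ((γ - 1) * ρ p ^ (γ - 1 - 1) * pd3 ρ p) p.2.2 :=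
    by have := (Real.hasDerivAt_rpow_const (x := ρ p) (p := γ - 1) (Or.inl ha)).comp p.2.2 aR3; exact this
  have hA1 : ρ p ^ γ = ρ p ^ (γ - 1) * ρ p := by
    rw [← Real.rpow_add_one ha (γ - 1), sub_add_cancel]
  have hA2 : ρ p ^ (γ - 1) = ρ p ^ (γ - 1 - 1) * ρ p := by
    rw [← Real.rpow_add_one ha (γ - 1 - 1), sub_add_cancel]
  have ec1 : pd1 (fun q => ρ q * u1 q) p = pd1 ρ p * u1 p + ρ p * pd1 u1 p :=
    (aR1.mul aU11).deriv
  have ec2 : pd2 (fun q => ρ q * u2 q) p = pd2 ρ p * u2 p + ρ p * pd2 u2 p :=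
    (aR2.mul aU22).deriv
  have ec3 : pd3 (fun q => ρ q * u3 q) p = pd3 ρ p * u3 p + ρ p * pd3 u3 p :=
    (aR3.mul aU33).deriv
  have em11 : pd1 (fun q => ρ q * u1 q * u1 q) p
      = (pd1 ρ p * u1 p + ρ p * pd1 u1 p) * u1 p + ρ p * u1 p * pd1 u1 p :=
    ((aR1.mul aU11).mul aU11).deriv
  have em21 : pd2 (fun q => ρ q * u1 q * u2 q) p
      = (pd2 ρ p * u1 p + ρ p * pd2 u1 p) * u2 p + ρ p * u1 p * pd2 u2 p :=
    ((aR2.mul aU21).mul aU22).deriv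
  have em31 : pd3 (fun q => ρ q * u1 q * u3 q) p
      = (pd3 ρ p * u1 p + ρ p * pd3 u1 p) * u3 p + ρ p * u1 p * pd3 u3 p :=
    ((aR3.mul aU31).mul aU33).deriv
  have em12 : pd1 (fun q => ρ q * u2 q * u1 q) p
      = (pd1 ρ p * u2 p + ρ p * pd1 u2 p) * u1 p + ρ p * u2 p * pd1 u1 p :=
    ((aR1.mul aU12).mul aU11).deriv
  have em22 : pd2 (fun q => ρ q * u2 q * u2 q) p
      = (pd2 ρ p * u2 p + ρ p * pd2 u2 p) * u2 p + ρ p * u2 p * pd2 u2 p :=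
    ((aR2.mul aU22).mul aU22).deriv
  have em32 : pd3 (fun q => ρ q * u2 q * u3 q) p
      = (pd3 ρ p * u2 p + ρ p * pd3 u2 p) * u3 p + ρ p * u2 p * pd3 u3 p :=
    ((aR3.mul aU32).mul aU33).deriv
  have em13 : pd1 (fun q => ρ q * u3 q * u1 q) p
      = (pd1 ρ p * u3 p + ρ p * pd1 u3 p) * u1 p + ρ p * u3 p * pd1 u1 p :=
    ((aR1.mul aU13).mul aU11).deriv
  have em23 : pd2 (fun q => ρ q * u3 q * u2 q) p
      = (pd2 ρ p * u3 p + ρ p * pd2 u3 p) * u2 p + ρ p * u3 p * pd2 u2 p :=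
    ((aR2.mul aU23).mul aU22).deriv
  have em33 : pd3 (fun q => ρ q * u3 q * u3 q) p
      = (pd3 ρ p * u3 p + ρ p * pd3 u3 p) * u3 p + ρ p * u3 p * pd3 u3 p :=
    ((aR3.mul aU33).mul aU33).deriv
  have ep1 : pd1 (fun q => S q * ρ q ^ γ) p
      = pd1 S p * ρ p ^ γ + S p * (γ * ρ p ^ (γ - 1) * pd1 ρ p) :=
    (aS1.mul aP1).deriv
  have ep2 : pd2 (fun q => S q * ρ q ^ γ) p
      = pd2 S p * ρ p ^ γ + S p * (γ * ρ p ^ (γ - 1) * pd2 ρ p) :=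
    (aS2.mul aP2).deriv
  have ep3 : pd3 (fun q => S q * ρ q ^ γ) p
      = pd3 S p * ρ p ^ γ + S p * (γ * ρ p ^ (γ - 1) * pd3 ρ p) :=
    (aS3.mul aP3).deriv
  have ek31 : pd3 (fun q => κ q * ρ q * u1 q) p
      = (pd3 κ p * ρ p + κ p * pd3 ρ p) * u1 p + κ p * ρ p * pd3 u1 p :=
    ((aK3.mul aR3).mul aU31).deriv
  have ek13 : pd1 (fun q => κ q * ρ q * u3 q) p
      = (pd1 κ p * ρ p + κ p * pd1 ρ p) * u3 p + κ p * ρ p * pd1 u3 p :=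
    ((aK1.mul aR1).mul aU13).deriv
  have ek12 : pd1 (fun q => κ q * ρ q * u2 q) p
      = (pd1 κ p * ρ p + κ p * pd1 ρ p) * u2 p + κ p * ρ p * pd1 u2 p :=
    ((aK1.mul aR1).mul aU12).deriv
  have ek21 : pd2 (fun q => κ q * ρ q * u1 q) p
      = (pd2 κ p * ρ p + κ p * pd2 ρ p) * u1 p + κ p * ρ p * pd2 u1 p :=
    ((aK2.mul aR2).mul aU21).deriv
  have ek23 : pd2 (fun q => κ q * ρ q * u3 q) p
      = (pd2 κ p * ρ p + κ p * pd2 ρ p) * u3 p + κ p * ρ p * pd2 u3 p :=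
    ((aK2.mul aR2).mul aU23).deriv
  have ek32 : pd3 (fun q => κ q * ρ q * u2 q) p
      = (pd3 κ p * ρ p + κ p * pd3 ρ p) * u2 p + κ p * ρ p * pd3 u2 p :=
    ((aK3.mul aR3).mul aU32).deriv
  have ew31 : pd3 (fun q => (1 - κ q ^ 2 * ρ q) * u1 q) p
      = -(2 * κ p ^ 1 * pd3 κ p * ρ p + κ p ^ 2 * pd3 ρ p) * u1 p
        + (1 - κ p ^ 2 * ρ p) * pd3 u1 p :=
    ((((aK3.pow 2).mul aR3).const_sub 1).mul aU31).deriv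
  have ew13 : pd1 (fun q => (1 - κ q ^ 2 * ρ q) * u3 q) p
      = -(2 * κ p ^ 1 * pd1 κ p * ρ p + κ p ^ 2 * pd1 ρ p) * u3 p
        + (1 - κ p ^ 2 * ρ p) * pd1 u3 p :=
    ((((aK1.pow 2).mul aR1).const_sub 1).mul aU13).deriv
  have ew12 : pd1 (fun q => (1 - κ q ^ 2 * ρ q) * u2 q) p
      = -(2 * κ p ^ 1 * pd1 κ p * ρ p + κ p ^ 2 * pd1 ρ p) * u2 p
        + (1 - κ p ^ 2 * ρ p) * pd1 u2 p :=
    ((((aK1.pow 2).mul aR1).const_sub 1).mul aU12).deriv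
  have ew21 : pd2 (fun q => (1 - κ q ^ 2 * ρ q) * u1 q) p
      = -(2 * κ p ^ 1 * pd2 κ p * ρ p + κ p ^ 2 * pd2 ρ p) * u1 p
        + (1 - κ p ^ 2 * ρ p) * pd2 u1 p :=
    ((((aK2.pow 2).mul aR2).const_sub 1).mul aU21).deriv
  have ew23 : pd2 (fun q => (1 - κ q ^ 2 * ρ q) * u3 q) p
      = -(2 * κ p ^ 1 * pd2 κ p * ρ p + κ p ^ 2 * pd2 ρ p) * u3 p
        + (1 - κ p ^ 2 * ρ p) * pd2 u3 p :=
    ((((aK2.pow 2).mul aR2).const_sub 1).mul aU23).deriv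
  have ew32 : pd3 (fun q => (1 - κ q ^ 2 * ρ q) * u2 q) p
      = -(2 * κ p ^ 1 * pd3 κ p * ρ p + κ p ^ 2 * pd3 ρ p) * u2 p
        + (1 - κ p ^ 2 * ρ p) * pd3 u2 p :=
    ((((aK3.pow 2).mul aR3).const_sub 1).mul aU32).deriv
  have eB1 : pd1 (BernC γ ρ u1 u2 u3 S) p
      = (2 * u1 p ^ 1 * pd1 u1 p + 2 * u2 p ^ 1 * pd1 u2 p + 2 * u3 p ^ 1 * pd1 u3 p) / 2
        + (γ * pd1 S p * ρ p ^ (γ - 1) + γ * S p * ((γ - 1) * ρ p ^ (γ - 1 - 1) * pd1 ρ p)) / (γ - 1) :=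
    (((((aU11.pow 2).add (aU12.pow 2)).add (aU13.pow 2)).div_const 2).add
      (((aS1.const_mul γ).mul aQ1).div_const (γ - 1))).deriv
  have eB2 : pd2 (BernC γ ρ u1 u2 u3 S) p
      = (2 * u1 p ^ 1 * pd2 u1 p + 2 * u2 p ^ 1 * pd2 u2 p + 2 * u3 p ^ 1 * pd2 u3 p) / 2
        + (γ * pd2 S p * ρ p ^ (γ - 1) + γ * S p * ((γ - 1) * ρ p ^ (γ - 1 - 1) * pd2 ρ p)) / (γ - 1) :=
    (((((aU21.pow 2).add (aU22.pow 2)).add (aU23.pow 2)).div_const 2).add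
      (((aS2.const_mul γ).mul aQ2).div_const (γ - 1))).deriv
  have eB3 : pd3 (BernC γ ρ u1 u2 u3 S) p
      = (2 * u1 p ^ 1 * pd3 u1 p + 2 * u2 p ^ 1 * pd3 u2 p + 2 * u3 p ^ 1 * pd3 u3 p) / 2
        + (γ * pd3 S p * ρ p ^ (γ - 1) + γ * S p * ((γ - 1) * ρ p ^ (γ - 1 - 1) * pd3 ρ p)) / (γ - 1) :=
    (((((aU31.pow 2).add (aU32.pow 2)).add (aU33.pow 2)).div_const 2).add
      (((aS3.const_mul γ).mul aQ3).div_const (γ - 1))).deriv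
  rw [ec1, ec2, ec3] at hC
  rw [em11, em21, em31, ep1, ek31, ek13, ek12, ek21, hA1, hA2] at hM1
  rw [em12, em22, em32, ep2, ek12, ek21, ek23, ek32, hA1, hA2] at hM2
  rw [em13, em23, em33, ep3, ek23, ek32, ek31, ek13, hA1, hA2] at hM3
  have hT' : u1 p * pd1 κ p + u2 p * pd2 κ p + u3 p * pd3 κ p = 0 := by
    refine mul_left_cancel₀ ha ?_
    linear_combination hT
  have hN1 : u1 p * pd1 u1 p + u2 p * pd2 u1 p + u3 p * pd3 u1 p
      + pd1 S p * (ρ p ^ (γ - 1 - 1) * ρ p) + S p * γ * ρ p ^ (γ - 1 - 1) * pd1 ρ p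
      = κ p * ((((pd3 κ p * ρ p + κ p * pd3 ρ p) * u1 p + κ p * ρ p * pd3 u1 p) - ((pd1 κ p * ρ p + κ p * pd1 ρ p) * u3 p + κ p * ρ p * pd1 u3 p)) * u3 p - (((pd1 κ p * ρ p + κ p * pd1 ρ p) * u2 p + κ p * ρ p * pd1 u2 p) - ((pd2 κ p * ρ p + κ p * pd2 ρ p) * u1 p + κ p * ρ p * pd2 u1 p)) * u2 p) := by
    refine mul_left_cancel₀ ha ?_
    linear_combination hM1 - u1 p * hC
  have hN2 : u1 p * pd1 u2 p + u2 p * pd2 u2 p + u3 p * pd3 u2 p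
      + pd2 S p * (ρ p ^ (γ - 1 - 1) * ρ p) + S p * γ * ρ p ^ (γ - 1 - 1) * pd2 ρ p
      = κ p * ((((pd1 κ p * ρ p + κ p * pd1 ρ p) * u2 p + κ p * ρ p * pd1 u2 p) - ((pd2 κ p * ρ p + κ p * pd2 ρ p) * u1 p + κ p * ρ p * pd2 u1 p)) * u1 p - (((pd2 κ p * ρ p + κ p * pd2 ρ p) * u3 p + κ p * ρ p * pd2 u3 p) - ((pd3 κ p * ρ p + κ p * pd3 ρ p) * u2 p + κ p * ρ p * pd3 u2 p)) * u3 p) := by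
    refine mul_left_cancel₀ ha ?_
    linear_combination hM2 - u2 p * hC
  have hN3 : u1 p * pd1 u3 p + u2 p * pd2 u3 p + u3 p * pd3 u3 p
      + pd3 S p * (ρ p ^ (γ - 1 - 1) * ρ p) + S p * γ * ρ p ^ (γ - 1 - 1) * pd3 ρ p
      = κ p * ((((pd2 κ p * ρ p + κ p * pd2 ρ p) * u3 p + κ p * ρ p * pd2 u3 p) - ((pd3 κ p * ρ p + κ p * pd3 ρ p) * u2 p + κ p * ρ p * pd3 u2 p)) * u2 p - (((pd3 κ p * ρ p + κ p * pd3 ρ p) * u1 p + κ p * ρ p * pd3 u1 p) - ((pd1 κ p * ρ p + κ p * pd1 ρ p) * u3 p + κ p * ρ p * pd1 u3 p)) * u1 p) := by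
    refine mul_left_cancel₀ ha ?_
    linear_combination hM3 - u3 p * hC
  rw [ew31, ew13, ew12, ew21, ew23, ew32, eB1, eB2, eB3, hA2]
  refine ⟨?_, ?_, ?_⟩
  · linear_combination hN1 - κ p * ρ p * u1 p * hT'
      + (pd1 S p * (ρ p ^ (γ - 1 - 1) * ρ p) + γ * S p * ρ p ^ (γ - 1 - 1) * pd1 ρ p) * hw
  · linear_combination hN2 - κ p * ρ p * u2 p * hT'
      + (pd2 S p * (ρ p ^ (γ - 1 - 1) * ρ p) + γ * S p * ρ p ^ (γ - 1 - 1) * pd2 ρ p) * hw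
  · linear_combination hN3 - κ p * ρ p * u3 p * hT'
      + (pd3 S p * (ρ p ^ (γ - 1 - 1) * ρ p) + γ * S p * ρ p ^ (γ - 1 - 1) * pd3 ρ p) * hw
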